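/- Define τ₀ : {a,b,c,d}* → {a,b,c,d}* as the monoid homomorphism given on letters by τ₀(a) = c, τ₀(b) = ada, τ₀(c) = aba, τ₀(d) = aca. Then for every word w, the length satisfies |τ₀(w)| ≤ 3|w|, and if w is a reduced word (alternating form with letters from {b,c,d} separated by single a's), then |τ₀(w)| ≤ 2|w| + 1. -/

import Mathlib

inductive GLetter : Type
  | a | b | c | d
deriving DecidableEq

/-- The substitution τ₀ on letters: a ↦ c, b ↦ ada, c ↦ aba, d ↦ aca. -/
def tau0Letter : GLetter → List GLetter
  | .a => [.c]
  | .b => [.a, .d, .a]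
  | .c => [.a, .b, .a]
  | .d => [.a, .c, .a]

/-- τ₀ extended multiplicatively (by concatenation) to words. -/
def tau0 (w : List GLetter) : List GLetter := (w.map tau0Letter).flatten

/-- A word is reduced if letters alternate between `a` and letters in
`{b,c,d}`, i.e. it has the form [a] x₁ a x₂ a … a x_k [a]. -/
def GIsReduced (w : List GLetter) : Prop :=
  w.Chain' fun x y => (x = GLetter.a ↔ y ≠ GLetter.a)

/-! τ₀ sends `a` to one letter and each of `b, c, d` to three, so `|τ₀ w| = |w| + 2 k` where `k`
is the number of non-`a` letters of `w`; trivially `k ≤ |w|`. In a reduced word the letters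
alternate between `a` and non-`a`, so `k` exceeds the number of `a`'s by at most one, which gives
`k ≤ (|w| + 1) / 2`. -/

theorem List.IsChain.countP_le_countP_not_add_one {α : Type*} {p : α → Bool} :
    ∀ {l : List α}, l.IsChain (fun x y => p x ≠ p y) → l.countP p ≤ l.countP (¬ p ·) + 1
  | [], _ => by simp
  | [x], _ => by cases hx : p x <;> simp [hx]
  | x :: y :: t, h => by
    obtain ⟨hxy, hyt⟩ := List.isChain_cons_cons.mp h
    have ht := hyt.tail.countP_le_countP_not_add_one
    simp only [List.countP_cons]
    cases hx : p x <;> cases hy : p y <;> simp_all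

theorem length_tau0 (w : List GLetter) :
    (tau0 w).length = w.length + 2 * w.countP (· != .a) := by
  induction w with
  | nil => rfl
  | cons x t ih =>
    simp only [tau0, List.map_cons, List.flatten_cons, List.length_append] at ih ⊢
    cases x <;> simp [tau0Letter, ih] <;> omega

theorem GIsReduced.isChain_ne_a {w : List GLetter} (hw : GIsReduced w) :
    w.IsChain fun x y => (x != .a) ≠ (y != .a) :=
  List.IsChain.imp (fun x y => by cases x <;> cases y <;> simp) hw

theorem tau0_length_bounds (w : List GLetter) :
    (tau0 w).length ≤ 3 * w.length ∧
    (GIsReduced w → (tau0 w).length ≤ 2 * w.length + 1) := by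
  have hsplit := List.length_eq_countP_add_countP (· != GLetter.a) (l := w)
  rw [length_tau0]
  refine ⟨by omega, fun hw => ?_⟩
  have := hw.isChain_ne_a.countP_le_countP_not_add_one
  omega
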